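/- arXiv:2511.01672 — 2 statements merged into one kernel-verified Lean document; each statement's English description precedes it below -/
import Mathlib

section
/- Suppose P : ℝ → ℝ^{n×n} satisfies the backward Lyapunov ODE on [0,T] and P(t) is symmetric for every t ∈ [0,T]. Let ε > 0 and let μ > 0 satisfy ϑ(μ) < ε / (2·(ζ − α + ‖L·D‖)). Then for all τ₀, τ₁ with 0 ≤ τ₀ ≤ τ₁ ≤ T and τ₁ − τ₀ < μ, it holds that ‖Ψ(τ₁) − Ψ(τ₀)‖ < ε. -/
open Matrix

noncomputable section

attribute [local instance] Matrix.normedAddCommGroup Matrix.normedSpace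

/-- Spectral norm (ℓ²-operator norm) of a square real matrix. -/
noncomputable def sNorm {ι : Type*} [Fintype ι] [DecidableEq ι] (M : Matrix ι ι ℝ) : ℝ :=
  ‖Matrix.toEuclideanCLM (𝕜 := ℝ) M‖

/-- `S ≺ 0`: the quadratic form of `S` is negative on every nonzero vector. -/
def NegDef {ι : Type*} [Fintype ι] (S : Matrix ι ι ℝ) : Prop :=
  ∀ x : ι → ℝ, x ≠ 0 → x ⬝ᵥ S.mulVec x < 0

/-- The modulus-of-continuity bound ϑ(μ) from Lemma 2 of the paper. -/
noncomputable def vartheta {n p : ℕ} (T ζ : ℝ) (A : Matrix (Fin n) (Fin n) ℝ)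
    (C : Matrix (Fin p) (Fin n) ℝ) (X : Matrix (Fin n) (Fin n) ℝ) (μ : ℝ) : ℝ :=
  let a := sNorm (A + ζ • (1 : Matrix (Fin n) (Fin n) ℝ))
  let PP := (sNorm X + T * sNorm (Cᵀ * C)) * Real.exp (2 * T * a)
  μ * Real.exp (2 * a * μ) * sNorm (Cᵀ * C) +
    (2 * (Real.exp (a * μ) - 1) + (Real.exp (a * μ) - 1) ^ 2) * PP

/-- The 4n×4n symmetric block matrix Ψ from the paper (eq. (10)), as a function of
the tuning parameters and of the value `Pt = P(t)`. -/
noncomputable def Psi {n m : ℕ}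
    (A : Matrix (Fin n) (Fin n) ℝ) (D : Matrix (Fin m) (Fin n) ℝ)
    (L : Matrix (Fin n) (Fin m) ℝ) (Q W : Matrix (Fin n) (Fin n) ℝ)
    (ζ α h γ κ : ℝ) (Pt : Matrix (Fin n) (Fin n) ℝ) :
    Matrix (Fin 4 × Fin n) (Fin 4 × Fin n) ℝ :=
  let U := A - L * D
  let c := h ^ 2 * Real.exp (2 * α * h)
  let Ψ11 := (-(2 * (ζ - α))) • Pt + (γ * κ ^ 2) • (1 : Matrix (Fin n) (Fin n) ℝ)
  let Ψ12 := Pt * L * D + (γ * κ ^ 2) • (1 : Matrix (Fin n) (Fin n) ℝ)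
  let Ψ13 := -(Pt * L * D)
  let Ψ14 : Matrix (Fin n) (Fin n) ℝ := 0
  let Ψ22 := Uᵀ * Q + Q * U + (2 * α) • Q + (γ * κ ^ 2) • (1 : Matrix (Fin n) (Fin n) ℝ)
      + c • (Uᵀ * W * U)
  let Ψ23 := Q * L * D + c • (Uᵀ * W * L * D)
  let Ψ24 := Q + c • (Uᵀ * W)
  let Ψ33 := (-(Real.pi ^ 2 / 4)) • W + c • (Dᵀ * Lᵀ * W * L * D)
  let Ψ34 := c • (Dᵀ * Lᵀ * W)
  let Ψ44 := (-γ) • (1 : Matrix (Fin n) (Fin n) ℝ) + c • W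
  fun q r =>
    (!![Ψ11, Ψ12, Ψ13, Ψ14;
        Ψ12ᵀ, Ψ22, Ψ23, Ψ24;
        Ψ13ᵀ, Ψ23ᵀ, Ψ33, Ψ34;
        Ψ14ᵀ, Ψ24ᵀ, Ψ34ᵀ, Ψ44] q.1 r.1) q.2 r.2

/-!
With `A_ζ = A + ζ I` the flow reads `-P' = A_ζᵀ P + P A_ζ + CᵀC`, so
`‖P'‖ ≤ 2‖A_ζ‖‖P‖ + ‖CᵀC‖`. Grönwall's inequality, run backwards from `P(T) = X`, bounds `‖P‖`
by `𝐏` on `[0, T]`; hence `P` is Lipschitz with constant `2‖A_ζ‖𝐏 + ‖CᵀC‖`, and over an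
interval shorter than `μ` its increment `E` has norm at most `ϑ(μ)`, as `2‖A_ζ‖μ ≤ e^{2‖A_ζ‖μ} - 1`.

`Ψ` is affine in `P`: `Ψ(τ₁) - Ψ(τ₀)` is the sum of `-2(ζ - α) E` in the first diagonal block and
of `E L D`, `-E L D` in blocks `(1,2)`, `(1,3)` together with their transposes. Each of these three
summands has at most one nonzero block in every block row and column, so its spectral norm is at
most the largest norm of its blocks; hence `‖Ψ(τ₁) - Ψ(τ₀)‖ ≤ 2(ζ - α + ‖L D‖)‖E‖`.
-/

section SpectralNorm

variable {ι : Type*} [Fintype ι] [DecidableEq ι]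

lemma sNorm_nonneg (M : Matrix ι ι ℝ) : 0 ≤ sNorm M := norm_nonneg _

lemma sNorm_add_le (M N : Matrix ι ι ℝ) : sNorm (M + N) ≤ sNorm M + sNorm N := by
  simpa [sNorm] using norm_add_le (toEuclideanCLM (𝕜 := ℝ) M) (toEuclideanCLM (𝕜 := ℝ) N)

lemma sNorm_mul_le (M N : Matrix ι ι ℝ) : sNorm (M * N) ≤ sNorm M * sNorm N := by
  simpa [sNorm] using norm_mul_le (toEuclideanCLM (𝕜 := ℝ) M) (toEuclideanCLM (𝕜 := ℝ) N)

lemma sNorm_smul (c : ℝ) (M : Matrix ι ι ℝ) : sNorm (c • M) = |c| * sNorm M := by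
  simp [sNorm, norm_smul]

lemma sNorm_neg (M : Matrix ι ι ℝ) : sNorm (-M) = sNorm M := by simp [sNorm]

lemma sNorm_transpose (M : Matrix ι ι ℝ) : sNorm Mᵀ = sNorm M := by
  rw [sNorm, ← conjTranspose_eq_transpose_of_trivial, ← star_eq_conjTranspose, map_star,
    ContinuousLinearMap.star_eq_adjoint, LinearIsometryEquiv.norm_map, sNorm]

lemma HasDerivAt.toEuclideanCLM {P : ℝ → Matrix ι ι ℝ} {P' : Matrix ι ι ℝ} {t : ℝ}
    (hP : HasDerivAt P P' t) :
    HasDerivAt (fun s => Matrix.toEuclideanCLM (𝕜 := ℝ) (P s))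
      (Matrix.toEuclideanCLM (𝕜 := ℝ) P') t :=
  (LinearMap.toContinuousLinearMap
    (Matrix.toEuclideanCLM (𝕜 := ℝ) (n := ι)).toAlgEquiv.toLinearMap).hasFDerivAt.comp_hasDerivAt
      t hP

end SpectralNorm

section Gronwall

open Set

lemma exp_sub_one_le_mul_exp (y : ℝ) : Real.exp y - 1 ≤ y * Real.exp y := by
  have h := mul_le_mul_of_nonneg_right (Real.one_sub_le_exp_neg y) (Real.exp_pos y).le
  rw [← Real.exp_add, neg_add_cancel, Real.exp_zero] at h
  linarith

lemma gronwallBound_le_mul_exp {δ K ε : ℝ} (hK : 0 ≤ K) (hε : 0 ≤ ε) (x : ℝ) :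
    gronwallBound δ K ε x ≤ (δ + ε * x) * Real.exp (K * x) := by
  rcases hK.eq_or_lt with rfl | hK
  · simp [gronwallBound_K0]
  rw [gronwallBound_of_K_ne_0 hK.ne']
  have : ε / K * (Real.exp (K * x) - 1) ≤ ε * x * Real.exp (K * x) := by
    rw [div_mul_eq_mul_div, div_le_iff₀ hK]
    nlinarith [exp_sub_one_le_mul_exp (K * x)]
  linarith

variable {E : Type*} [NormedAddCommGroup E] [NormedSpace ℝ E]

theorem norm_le_of_norm_deriv_le_backward {f f' : ℝ → E} {T K c : ℝ} (hK : 0 ≤ K) (hc : 0 ≤ c)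
    (hf : ∀ t ∈ Icc 0 T, HasDerivAt f (f' t) t)
    (bound : ∀ t ∈ Icc 0 T, ‖f' t‖ ≤ K * ‖f t‖ + c) {t : ℝ} (ht : t ∈ Icc 0 T) :
    ‖f t‖ ≤ (‖f T‖ + T * c) * Real.exp (K * T) := by
  have hrefl : ∀ s ∈ Icc 0 T, T - s ∈ Icc 0 T := fun s hs =>
    ⟨by linarith [hs.2], by linarith [hs.1]⟩
  have hg : ∀ s ∈ Icc 0 T, HasDerivAt (fun s => f (T - s)) (-f' (T - s)) s := fun s hs => by
    simpa [Function.comp_def] using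
      (hf (T - s) (hrefl s hs)).scomp s ((hasDerivAt_id s).const_sub T)
  have := norm_le_gronwallBound_of_norm_deriv_right_le (δ := ‖f T‖) (K := K) (ε := c)
    (fun s hs => (hg s hs).continuousAt.continuousWithinAt)
    (fun s hs => (hg s (Ico_subset_Icc_self hs)).hasDerivWithinAt) (by simp)
    (fun s hs => by simpa using bound (T - s) (hrefl s (Ico_subset_Icc_self hs)))
    (T - t) (hrefl t ht)
  simp only [sub_sub_cancel, sub_zero] at this
  refine this.trans <| (gronwallBound_le_mul_exp hK hc _).trans ?_
  obtain ⟨ht0, htT⟩ := ht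
  have hT : 0 ≤ T := ht0.trans htT
  gcongr ?_ * Real.exp ?_ <;> nlinarith

end Gronwall

section Lyapunov

open Set

variable {ι : Type*} [Fintype ι] [DecidableEq ι]

lemma lyapunov_shift (A M N : Matrix ι ι ℝ) (ζ : ℝ) :
    Aᵀ * M + M * A + N + (2 * ζ) • M =
      (A + ζ • (1 : Matrix ι ι ℝ))ᵀ * M + M * (A + ζ • (1 : Matrix ι ι ℝ)) + N := by
  simp only [transpose_add, transpose_smul, transpose_one, Matrix.add_mul, Matrix.mul_add,
    Matrix.smul_mul, Matrix.mul_smul, Matrix.one_mul, Matrix.mul_one, two_mul, add_smul]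
  abel

lemma sNorm_lyapunov_le (K M N : Matrix ι ι ℝ) :
    sNorm (Kᵀ * M + M * K + N) ≤ 2 * sNorm K * sNorm M + sNorm N := by
  have h₁ := sNorm_mul_le Kᵀ M
  have h₂ := sNorm_mul_le M K
  have h₃ := sNorm_add_le (Kᵀ * M) (M * K)
  have h₄ := sNorm_add_le (Kᵀ * M + M * K) N
  rw [sNorm_transpose] at h₁
  linarith

variable {P : ℝ → Matrix ι ι ℝ} {K N : Matrix ι ι ℝ} {T : ℝ}

theorem sNorm_le_of_hasDerivAt_lyapunov
    (hP : ∀ t ∈ Icc 0 T, HasDerivAt P (-(Kᵀ * P t + P t * K + N)) t) {t : ℝ} (ht : t ∈ Icc 0 T) :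
    sNorm (P t) ≤ (sNorm (P T) + T * sNorm N) * Real.exp (2 * T * sNorm K) := by
  rw [mul_right_comm]
  exact norm_le_of_norm_deriv_le_backward (by positivity [sNorm_nonneg K]) (sNorm_nonneg N)
    (fun s hs => (hP s hs).toEuclideanCLM)
    (fun s _ => by rw [map_neg, norm_neg]; exact sNorm_lyapunov_le K (P s) N) ht

theorem sNorm_sub_le_of_hasDerivAt_lyapunov
    (hP : ∀ t ∈ Icc 0 T, HasDerivAt P (-(Kᵀ * P t + P t * K + N)) t) {τ₀ τ₁ : ℝ}
    (h₀ : 0 ≤ τ₀) (h₀₁ : τ₀ ≤ τ₁) (h₁ : τ₁ ≤ T) :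
    sNorm (P τ₁ - P τ₀) ≤ (τ₁ - τ₀) *
      (2 * sNorm K * ((sNorm (P T) + T * sNorm N) * Real.exp (2 * T * sNorm K)) + sNorm N) := by
  have hsub : Icc τ₀ τ₁ ⊆ Icc 0 T := Icc_subset_Icc h₀ h₁
  have hbound : ∀ t ∈ Ico τ₀ τ₁, ‖toEuclideanCLM (𝕜 := ℝ) (-(Kᵀ * P t + P t * K + N))‖ ≤
      2 * sNorm K * ((sNorm (P T) + T * sNorm N) * Real.exp (2 * T * sNorm K)) + sNorm N := by
    intro t ht
    rw [map_neg, norm_neg]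
    refine (sNorm_lyapunov_le K (P t) N).trans ?_
    have := sNorm_nonneg K
    gcongr
    exact sNorm_le_of_hasDerivAt_lyapunov hP (hsub (Ico_subset_Icc_self ht))
  have := norm_image_sub_le_of_norm_deriv_le_segment'
    (fun t ht => ((hP t (hsub ht)).toEuclideanCLM).hasDerivWithinAt) hbound τ₁ (right_mem_Icc.2 h₀₁)
  rw [← map_sub, mul_comm] at this
  exact this

end Lyapunov

lemma mul_le_vartheta {n p : ℕ} (T ζ : ℝ) (A : Matrix (Fin n) (Fin n) ℝ)
    (C : Matrix (Fin p) (Fin n) ℝ) (X : Matrix (Fin n) (Fin n) ℝ) {s μ : ℝ} (hT : 0 ≤ T)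
    (hs : 0 ≤ s) (hsμ : s ≤ μ) :
    s * (2 * sNorm (A + ζ • (1 : Matrix (Fin n) (Fin n) ℝ)) *
        ((sNorm X + T * sNorm (Cᵀ * C)) *
          Real.exp (2 * T * sNorm (A + ζ • (1 : Matrix (Fin n) (Fin n) ℝ)))) + sNorm (Cᵀ * C)) ≤
      vartheta T ζ A C X μ := by
  have hμ : 0 ≤ μ := hs.trans hsμ
  have hPP : 0 ≤ (sNorm X + T * sNorm (Cᵀ * C)) *
      Real.exp (2 * T * sNorm (A + ζ • (1 : Matrix (Fin n) (Fin n) ℝ))) := by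
    have := sNorm_nonneg X; have := sNorm_nonneg (Cᵀ * C); positivity
  simp only [vartheta]
  generalize (sNorm X + T * sNorm (Cᵀ * C)) *
    Real.exp (2 * T * sNorm (A + ζ • (1 : Matrix (Fin n) (Fin n) ℝ))) = PP at hPP ⊢
  have ha := sNorm_nonneg (A + ζ • (1 : Matrix (Fin n) (Fin n) ℝ))
  have hc := sNorm_nonneg (Cᵀ * C)
  generalize sNorm (A + ζ • (1 : Matrix (Fin n) (Fin n) ℝ)) = a at ha ⊢
  generalize sNorm (Cᵀ * C) = c at hc ⊢
  have hsq :
      2 * (Real.exp (a * μ) - 1) + (Real.exp (a * μ) - 1) ^ 2 = Real.exp (2 * a * μ) - 1 := by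
    rw [show 2 * a * μ = a * μ + a * μ by ring, Real.exp_add]; ring
  have hlin : 2 * a * μ ≤ Real.exp (2 * a * μ) - 1 := by linarith [Real.add_one_le_exp (2 * a * μ)]
  have hone : 1 ≤ Real.exp (2 * a * μ) := Real.one_le_exp (by positivity)
  calc s * (2 * a * PP + c) ≤ μ * (2 * a * PP + c) := by gcongr
    _ = 2 * a * μ * PP + μ * 1 * c := by ring
    _ ≤ (Real.exp (2 * a * μ) - 1) * PP + μ * Real.exp (2 * a * μ) * c := by gcongr
    _ = _ := by rw [hsq]; ring

section BlockMonomial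

variable {β ι : Type*} [Fintype β] [Fintype ι]

def blockMonomial [DecidableEq β] (σ : Equiv.Perm β) (B : β → Matrix ι ι ℝ) :
    Matrix (β × ι) (β × ι) ℝ :=
  Matrix.of fun a b => if b.1 = σ a.1 then B a.1 a.2 b.2 else 0

def blockRow (x : EuclideanSpace ℝ (β × ι)) (q : β) : EuclideanSpace ℝ ι :=
  WithLp.toLp 2 fun j => x (q, j)

lemma norm_sq_eq_sum_blockRow (x : EuclideanSpace ℝ (β × ι)) :
    ‖x‖ ^ 2 = ∑ q, ‖blockRow x q‖ ^ 2 := by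
  simp only [EuclideanSpace.norm_sq_eq, blockRow, Fintype.sum_prod_type]

variable [DecidableEq β] [DecidableEq ι]

lemma blockRow_toEuclideanCLM_blockMonomial (σ : Equiv.Perm β) (B : β → Matrix ι ι ℝ)
    (x : EuclideanSpace ℝ (β × ι)) (q : β) :
    blockRow (toEuclideanCLM (𝕜 := ℝ) (blockMonomial σ B) x) q =
      toEuclideanCLM (𝕜 := ℝ) (B q) (blockRow x (σ q)) := by
  ext i
  simp [blockRow, blockMonomial, mulVec, dotProduct, Fintype.sum_prod_type, ite_mul]

lemma sNorm_blockMonomial_le (σ : Equiv.Perm β) (B : β → Matrix ι ι ℝ) {c : ℝ} (hc : 0 ≤ c)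
    (hB : ∀ q, sNorm (B q) ≤ c) : sNorm (blockMonomial σ B) ≤ c := by
  refine ContinuousLinearMap.opNorm_le_bound _ hc fun x => ?_
  refine pow_le_pow_iff_left₀ (norm_nonneg _) (by positivity) two_ne_zero |>.1 ?_
  calc ‖toEuclideanCLM (𝕜 := ℝ) (blockMonomial σ B) x‖ ^ 2
      = ∑ q, ‖toEuclideanCLM (𝕜 := ℝ) (B q) (blockRow x (σ q))‖ ^ 2 := by
        simp only [norm_sq_eq_sum_blockRow, blockRow_toEuclideanCLM_blockMonomial]
    _ ≤ ∑ q, (c * ‖blockRow x (σ q)‖) ^ 2 := by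
        gcongr with q
        exact (ContinuousLinearMap.le_opNorm _ _).trans (by gcongr; exact hB q)
    _ = (c * ‖x‖) ^ 2 := by
        simp only [mul_pow, ← Finset.mul_sum, norm_sq_eq_sum_blockRow x,
          Equiv.sum_comp σ fun q => ‖blockRow x q‖ ^ 2]

lemma sNorm_blockMonomial_single_le (q : β) (M : Matrix ι ι ℝ) :
    sNorm (blockMonomial 1 (Pi.single q M)) ≤ sNorm M := by
  refine sNorm_blockMonomial_le _ _ (sNorm_nonneg M) fun s => ?_
  rcases eq_or_ne s q with rfl | hs
  · simp
  · simp [hs, sNorm]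

lemma sNorm_blockMonomial_swap_le {q r : β} (hqr : q ≠ r) (M : Matrix ι ι ℝ) :
    sNorm (blockMonomial (Equiv.swap q r) (Pi.single q M + Pi.single r Mᵀ)) ≤ sNorm M := by
  refine sNorm_blockMonomial_le _ _ (sNorm_nonneg M) fun s => ?_
  rcases eq_or_ne s q with rfl | hsq
  · simp [hqr.symm]
  rcases eq_or_ne s r with rfl | hsr
  · simp [hsq, sNorm_transpose]
  · simp [hsq, hsr, sNorm]

end BlockMonomial

lemma Psi_sub_eq {n m : ℕ} (A : Matrix (Fin n) (Fin n) ℝ) (D : Matrix (Fin m) (Fin n) ℝ)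
    (L : Matrix (Fin n) (Fin m) ℝ) (Q W : Matrix (Fin n) (Fin n) ℝ) (ζ α h γ κ : ℝ)
    (P₁ P₀ : Matrix (Fin n) (Fin n) ℝ) :
    Psi A D L Q W ζ α h γ κ P₁ - Psi A D L Q W ζ α h γ κ P₀ =
      blockMonomial 1 (Pi.single (0 : Fin 4) ((-(2 * (ζ - α))) • (P₁ - P₀)))
      + blockMonomial (Equiv.swap (0 : Fin 4) 1)
          (Pi.single 0 ((P₁ - P₀) * L * D) + Pi.single (1 : Fin 4) ((P₁ - P₀) * L * D)ᵀ)
      + blockMonomial (Equiv.swap (0 : Fin 4) 2)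
          (Pi.single 0 (-((P₁ - P₀) * L * D)) + Pi.single (2 : Fin 4) (-((P₁ - P₀) * L * D))ᵀ) := by
  ext ⟨q, i⟩ ⟨r, j⟩
  rw [Matrix.sub_apply, Matrix.add_apply, Matrix.add_apply]
  simp only [Psi, blockMonomial, of_apply]
  fin_cases q <;> fin_cases r <;>
    simp only [Fin.isValue, Fin.reduceFinMk, Matrix.cons_val, Fin.reduceEq, Equiv.swap_apply_left,
      Equiv.swap_apply_right, Equiv.Perm.one_apply, if_true, if_false, Pi.add_apply,
      Pi.single_eq_same, Pi.single_eq_of_ne, Equiv.swap_apply_of_ne_of_ne, ne_eq,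
      not_false_eq_true, Matrix.sub_mul, Matrix.sub_apply, Matrix.add_apply,
      Matrix.transpose_apply, Matrix.neg_apply, Matrix.smul_apply, smul_eq_mul,
      Matrix.zero_apply] <;> ring

lemma sNorm_Psi_sub_le {n m : ℕ} (A : Matrix (Fin n) (Fin n) ℝ) (D : Matrix (Fin m) (Fin n) ℝ)
    (L : Matrix (Fin n) (Fin m) ℝ) (Q W : Matrix (Fin n) (Fin n) ℝ) {ζ α : ℝ} (hαζ : α ≤ ζ)
    (h γ κ : ℝ) (P₁ P₀ : Matrix (Fin n) (Fin n) ℝ) :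
    sNorm (Psi A D L Q W ζ α h γ κ P₁ - Psi A D L Q W ζ α h γ κ P₀) ≤
      2 * (ζ - α + sNorm (L * D)) * sNorm (P₁ - P₀) := by
  have hELD : sNorm ((P₁ - P₀) * L * D) ≤ sNorm (P₁ - P₀) * sNorm (L * D) := by
    rw [Matrix.mul_assoc]; exact sNorm_mul_le _ _
  have hdiag := sNorm_blockMonomial_single_le (0 : Fin 4) ((-(2 * (ζ - α))) • (P₁ - P₀))
  have hpair₁ := sNorm_blockMonomial_swap_le (show (0 : Fin 4) ≠ 1 by decide) ((P₁ - P₀) * L * D)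
  have hpair₂ := sNorm_blockMonomial_swap_le (show (0 : Fin 4) ≠ 2 by decide)
    (-((P₁ - P₀) * L * D))
  rw [sNorm_smul, abs_of_nonpos (by linarith), neg_neg] at hdiag
  rw [sNorm_neg] at hpair₂
  rw [Psi_sub_eq]
  refine (sNorm_add_le _ _).trans <| (add_le_add (sNorm_add_le _ _) le_rfl).trans <|
    (add_le_add (add_le_add hdiag hpair₁) hpair₂).trans ?_
  linarith

theorem stmt4_general {n p m : ℕ} (T ζ : ℝ)
    (A : Matrix (Fin n) (Fin n) ℝ) (C : Matrix (Fin p) (Fin n) ℝ)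
    (X : Matrix (Fin n) (Fin n) ℝ)
    (D : Matrix (Fin m) (Fin n) ℝ) (L : Matrix (Fin n) (Fin m) ℝ)
    (α h γ κ : ℝ) (hαζ : α < ζ)
    (Q W : Matrix (Fin n) (Fin n) ℝ)
    (P : ℝ → Matrix (Fin n) (Fin n) ℝ)
    (hP : ∀ t ∈ Set.Icc (0:ℝ) T,
        HasDerivAt P (-(Aᵀ * P t + P t * A + Cᵀ * C + (2 * ζ) • P t)) t)
    (hPT : P T = X)
    (ε μ : ℝ)
    (hϑ : vartheta T ζ A C X μ < ε / (2 * (ζ - α + sNorm (L * D)))) :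
    ∀ τ₀ τ₁ : ℝ, 0 ≤ τ₀ → τ₀ ≤ τ₁ → τ₁ ≤ T → τ₁ - τ₀ < μ →
      sNorm (Psi A D L Q W ζ α h γ κ (P τ₁) - Psi A D L Q W ζ α h γ κ (P τ₀)) < ε := by
  intro τ₀ τ₁ h₀ h₀₁ h₁ hμ
  have hP' : ∀ t ∈ Set.Icc (0:ℝ) T, HasDerivAt P
      (-((A + ζ • (1 : Matrix (Fin n) (Fin n) ℝ))ᵀ * P t + P t * (A + ζ • 1) + Cᵀ * C)) t :=
    fun t ht => lyapunov_shift A (P t) (Cᵀ * C) ζ ▸ hP t ht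
  have hE : sNorm (P τ₁ - P τ₀) ≤ vartheta T ζ A C X μ := by
    refine (sNorm_sub_le_of_hasDerivAt_lyapunov hP' h₀ h₀₁ h₁).trans ?_
    rw [hPT]
    exact mul_le_vartheta T ζ A C X (h₀.trans (h₀₁.trans h₁)) (sub_nonneg.2 h₀₁) hμ.le
  have hd : 0 < 2 * (ζ - α + sNorm (L * D)) := by linarith [sNorm_nonneg (L * D)]
  calc _ ≤ 2 * (ζ - α + sNorm (L * D)) * sNorm (P τ₁ - P τ₀) :=
        sNorm_Psi_sub_le A D L Q W hαζ.le h γ κ _ _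
    _ ≤ 2 * (ζ - α + sNorm (L * D)) * vartheta T ζ A C X μ := by gcongr
    _ < ε := by rwa [lt_div_iff₀' hd] at hϑ

/-- Corollary 1 of the paper: uniform continuity bound for Ψ along solutions of the
backward Lyapunov ODE. -/
theorem stmt4 {n p m : ℕ} (hn : 1 ≤ n) (hp : 1 ≤ p) (hm : 1 ≤ m)
    (T ζ : ℝ) (hT : 0 < T) (hζ : 0 < ζ)
    (A : Matrix (Fin n) (Fin n) ℝ) (C : Matrix (Fin p) (Fin n) ℝ)
    (X : Matrix (Fin n) (Fin n) ℝ) (hX : X.PosDef)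
    (D : Matrix (Fin m) (Fin n) ℝ) (L : Matrix (Fin n) (Fin m) ℝ)
    (α h γ κ : ℝ) (hα0 : 0 ≤ α) (hαζ : α < ζ) (hh : 0 < h) (hγ : 0 < γ) (hκ : 0 < κ)
    (Q W : Matrix (Fin n) (Fin n) ℝ) (hQ : Q.PosDef) (hW : W.PosDef)
    (P : ℝ → Matrix (Fin n) (Fin n) ℝ)
    (hP : ∀ t ∈ Set.Icc (0:ℝ) T,
        HasDerivAt P (-(Aᵀ * P t + P t * A + Cᵀ * C + (2 * ζ) • P t)) t)
    (hPT : P T = X)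
    (hPsym : ∀ t ∈ Set.Icc (0:ℝ) T, (P t).IsSymm)
    (ε μ : ℝ) (hε : 0 < ε) (hμ : 0 < μ)
    (hϑ : vartheta T ζ A C X μ < ε / (2 * (ζ - α + sNorm (L * D)))) :
    ∀ τ₀ τ₁ : ℝ, 0 ≤ τ₀ → τ₀ ≤ τ₁ → τ₁ ≤ T → τ₁ - τ₀ < μ →
      sNorm (Psi A D L Q W ζ α h γ κ (P τ₁) - Psi A D L Q W ζ α h γ κ (P τ₀)) < ε :=
  stmt4_general T ζ A C X D L α h γ κ hαζ Q W P hP hPT ε μ hϑ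
end
end

section
/- Let φ, e : [0,∞) → ℝⁿ be continuous functions such that ‖φ(s)‖² + ‖e(s)‖² ≤ M·e^{−2αs}·R² for all s ≥ 0. Then for every τ > 0, |(1/τ)·∫₀^τ (φ(s)+e(s))ᵀ·CᵀC·(φ(s)+e(s)) ds − (1/τ)·∫₀^τ φ(s)ᵀ·CᵀC·φ(s) ds| ≤ (3·M·‖CᵀC‖·R²/(2ατ))·(1 − e^{−2ατ}) ≤ 3·M·‖CᵀC‖·R²/(2ατ). -/
/-!
With `S = CᵀC` and `x = φ + e`, the quadratic form of `x` differs from that of `φ` by the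
cross terms `φᵀ S e + eᵀ S φ + eᵀ S e`, each bounded by `‖S‖` times a product of `‖φ‖` and
`‖e‖`; since `2ab + b² ≤ 3(a² + b²)`, the integrand of the error is at most
`3‖S‖MR² e^{-2αs}`, whose average over `[0, τ]` is computed explicitly.
-/

open Matrix

noncomputable section

attribute [local instance] Matrix.normedAddCommGroup Matrix.normedSpace

open Real WithLp

lemma sNorm_nonneg_s14 {ι : Type*} [Fintype ι] [DecidableEq ι] (A : Matrix ι ι ℝ) :
    0 ≤ sNorm A :=
  norm_nonneg _

lemma dotProduct_self_eq_norm_toLp_sq {ι : Type*} [Fintype ι] (v : ι → ℝ) :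
    v ⬝ᵥ v = ‖toLp 2 v‖ ^ 2 := by
  rw [EuclideanSpace.real_norm_sq_eq]
  simp [dotProduct, sq]

lemma abs_dotProduct_mulVec_le {ι : Type*} [Fintype ι] [DecidableEq ι] (A : Matrix ι ι ℝ)
    (v w : ι → ℝ) : |v ⬝ᵥ A *ᵥ w| ≤ sNorm A * ‖toLp 2 v‖ * ‖toLp 2 w‖ := by
  rw [← inner_toEuclideanCLM A (toLp 2 v) (toLp 2 w)]
  calc _ ≤ ‖toLp 2 v‖ * ‖toEuclideanCLM (𝕜 := ℝ) A (toLp 2 w)‖ := abs_real_inner_le_norm _ _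
    _ ≤ ‖toLp 2 v‖ * (sNorm A * ‖toLp 2 w‖) := by
        gcongr
        exact (toEuclideanCLM (𝕜 := ℝ) A).le_opNorm _
    _ = _ := by ring

lemma abs_dotProduct_mulVec_add_sub_le {ι : Type*} [Fintype ι] [DecidableEq ι]
    (A : Matrix ι ι ℝ) (v w : ι → ℝ) :
    |(v + w) ⬝ᵥ A *ᵥ (v + w) - v ⬝ᵥ A *ᵥ v| ≤ 3 * sNorm A * (v ⬝ᵥ v + w ⬝ᵥ w) := by
  have hexpand : (v + w) ⬝ᵥ A *ᵥ (v + w) - v ⬝ᵥ A *ᵥ v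
      = v ⬝ᵥ A *ᵥ w + w ⬝ᵥ A *ᵥ v + w ⬝ᵥ A *ᵥ w := by
    simp only [mulVec_add, dotProduct_add, add_dotProduct]
    ring
  set a := ‖toLp 2 v‖
  set b := ‖toLp 2 w‖
  have hN := sNorm_nonneg_s14 A
  calc |(v + w) ⬝ᵥ A *ᵥ (v + w) - v ⬝ᵥ A *ᵥ v|
      ≤ |v ⬝ᵥ A *ᵥ w| + |w ⬝ᵥ A *ᵥ v| + |w ⬝ᵥ A *ᵥ w| := by
        rw [hexpand]
        exact (abs_add_le _ _).trans (by gcongr; exact abs_add_le _ _)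
    _ ≤ sNorm A * a * b + sNorm A * b * a + sNorm A * b * b := by
        gcongr <;> exact abs_dotProduct_mulVec_le A _ _
    _ ≤ 3 * sNorm A * (a ^ 2 + b ^ 2) := by nlinarith [two_mul_le_add_sq a b]
    _ = 3 * sNorm A * (v ⬝ᵥ v + w ⬝ᵥ w) := by
        rw [dotProduct_self_eq_norm_toLp_sq v, dotProduct_self_eq_norm_toLp_sq w]

lemma integral_exp_neg_mul {c : ℝ} (hc : c ≠ 0) (τ : ℝ) :
    ∫ s in (0 : ℝ)..τ, exp (-(c * s)) = (1 - exp (-(c * τ))) / c := by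
  simp_rw [← neg_mul]
  rw [intervalIntegral.integral_comp_mul_left exp (neg_ne_zero.mpr hc), integral_exp, mul_zero,
    exp_zero, smul_eq_mul, neg_mul]
  field_simp
  ring

lemma abs_average_le_of_abs_le_mul_exp {f : ℝ → ℝ} {K c τ : ℝ} (hc : c ≠ 0) (hτ : 0 < τ)
    (hf : ∀ s ∈ Set.Ioc 0 τ, |f s| ≤ K * exp (-(c * s))) :
    |(1 / τ) * ∫ s in (0 : ℝ)..τ, f s| ≤ K / (c * τ) * (1 - exp (-(c * τ))) := by
  have hint : |∫ s in (0 : ℝ)..τ, f s| ≤ K * ((1 - exp (-(c * τ))) / c) := by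
    rw [← integral_exp_neg_mul hc, ← intervalIntegral.integral_const_mul]
    exact intervalIntegral.norm_integral_le_of_norm_le (f := f) hτ.le (.of_forall hf)
      ((by fun_prop : Continuous fun s => K * exp (-(c * s))).intervalIntegrable _ _)
  rw [abs_mul, abs_of_pos (one_div_pos.mpr hτ)]
  calc 1 / τ * |∫ s in (0 : ℝ)..τ, f s| ≤ 1 / τ * (K * ((1 - exp (-(c * τ))) / c)) := by
        gcongr
    _ = K / (c * τ) * (1 - exp (-(c * τ))) := by ring

theorem stmt14_general {n p : ℕ} (C : Matrix (Fin p) (Fin n) ℝ)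
    (α M R : ℝ) (hα : 0 < α) (hM : 0 < M)
    (φ e : ℝ → Fin n → ℝ) (hφ : Continuous φ) (he : Continuous e)
    (hdecay : ∀ s ≥ (0:ℝ), φ s ⬝ᵥ φ s + e s ⬝ᵥ e s ≤ M * Real.exp (-(2 * α * s)) * R ^ 2) :
    ∀ τ > (0:ℝ),
      |(1 / τ) * (∫ s in (0:ℝ)..τ, (φ s + e s) ⬝ᵥ (Cᵀ * C).mulVec (φ s + e s))
          - (1 / τ) * (∫ s in (0:ℝ)..τ, φ s ⬝ᵥ (Cᵀ * C).mulVec (φ s))|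
        ≤ (3 * M * sNorm (Cᵀ * C) * R ^ 2 / (2 * α * τ)) * (1 - Real.exp (-(2 * α * τ)))
      ∧ (3 * M * sNorm (Cᵀ * C) * R ^ 2 / (2 * α * τ)) * (1 - Real.exp (-(2 * α * τ)))
          ≤ 3 * M * sNorm (Cᵀ * C) * R ^ 2 / (2 * α * τ) := by
  intro τ hτ
  set S := Cᵀ * C
  have hN := sNorm_nonneg_s14 S
  have hpointwise : ∀ s ∈ Set.Ioc 0 τ,
      |(φ s + e s) ⬝ᵥ S *ᵥ (φ s + e s) - φ s ⬝ᵥ S *ᵥ φ s|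
        ≤ 3 * M * sNorm S * R ^ 2 * exp (-(2 * α * s)) := fun s hs =>
    calc _ ≤ 3 * sNorm S * (φ s ⬝ᵥ φ s + e s ⬝ᵥ e s) := abs_dotProduct_mulVec_add_sub_le S _ _
      _ ≤ 3 * sNorm S * (M * exp (-(2 * α * s)) * R ^ 2) := by gcongr; exact hdecay s hs.1.le
      _ = _ := by ring
  have hdiff : (1 / τ) * (∫ s in (0:ℝ)..τ, (φ s + e s) ⬝ᵥ S *ᵥ (φ s + e s))
        - (1 / τ) * (∫ s in (0:ℝ)..τ, φ s ⬝ᵥ S *ᵥ φ s)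
      = (1 / τ) * ∫ s in (0:ℝ)..τ, ((φ s + e s) ⬝ᵥ S *ᵥ (φ s + e s) - φ s ⬝ᵥ S *ᵥ φ s) := by
    rw [intervalIntegral.integral_sub, mul_sub] <;>
      apply Continuous.intervalIntegrable <;> fun_prop
  refine ⟨?_, mul_le_of_le_one_right (by positivity) (sub_le_self _ (exp_pos _).le)⟩
  rw [hdiff]
  exact abs_average_le_of_abs_le_mul_exp (by positivity) hτ hpointwise

/-- The average-cost error bound from Theorem 1 (Objective 2): under the exponential
decay bound ‖φ(s)‖² + ‖e(s)‖² ≤ M·e^{−2αs}·R², the deviation between the actual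
average cost (with x = φ + e) and its observer-based estimate is explicitly bounded.
Here `v ⬝ᵥ v` is the squared Euclidean norm of `v`. -/
theorem stmt14 {n p : ℕ} (hn : 1 ≤ n) (hp : 1 ≤ p) (C : Matrix (Fin p) (Fin n) ℝ)
    (α M R : ℝ) (hα : 0 < α) (hM : 0 < M) (hR : 0 < R)
    (φ e : ℝ → Fin n → ℝ) (hφ : Continuous φ) (he : Continuous e)
    (hdecay : ∀ s ≥ (0:ℝ), φ s ⬝ᵥ φ s + e s ⬝ᵥ e s ≤ M * Real.exp (-(2 * α * s)) * R ^ 2) :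
    ∀ τ > (0:ℝ),
      |(1 / τ) * (∫ s in (0:ℝ)..τ, (φ s + e s) ⬝ᵥ (Cᵀ * C).mulVec (φ s + e s))
          - (1 / τ) * (∫ s in (0:ℝ)..τ, φ s ⬝ᵥ (Cᵀ * C).mulVec (φ s))|
        ≤ (3 * M * sNorm (Cᵀ * C) * R ^ 2 / (2 * α * τ)) * (1 - Real.exp (-(2 * α * τ)))
      ∧ (3 * M * sNorm (Cᵀ * C) * R ^ 2 / (2 * α * τ)) * (1 - Real.exp (-(2 * α * τ)))
          ≤ 3 * M * sNorm (Cᵀ * C) * R ^ 2 / (2 * α * τ) :=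
  stmt14_general C α M R hα hM φ e hφ he hdecay
end
end
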